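/- arXiv:1309.1632 — 3 statements merged into one kernel-verified Lean document; each statement's English description precedes it below -/
import Mathlib

section
/- Every finite simple graph G without isolated vertices has domination number γ(G) ≤ n/2, where n is the number of vertices. -/
open SimpleGraph Matrix

open Classical in
/-- The signless Laplacian matrix `Q(G) = D(G) + A(G)` of a simple graph. -/
noncomputable def signlessLaplacian {V : Type*} [Fintype V] (G : SimpleGraph V) : Matrix V V ℝ :=
  G.degMatrix ℝ + G.adjMatrix ℝ

open Classical in
/-- The least eigenvalue of the signless Laplacian. -/
noncomputable def qmin {V : Type*} [Fintype V] (G : SimpleGraph V) : ℝ :=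
  sInf (spectrum ℝ (signlessLaplacian G))

/-- A dominating set: every vertex outside `S` has a neighbor in `S`. -/
def IsDominatingSet {V : Type*} (G : SimpleGraph V) (S : Set V) : Prop :=
  ∀ v ∉ S, ∃ u ∈ S, G.Adj u v

/-- The domination number: minimum cardinality of a dominating set. -/
noncomputable def dominationNumber {V : Type*} [Fintype V] (G : SimpleGraph V) : ℕ :=
  sInf {k | ∃ S : Set V, IsDominatingSet G S ∧ S.ncard = k}

/-!
Take a dominating set `D` of minimum size. Every `v ∈ D` has a neighbour outside `D`: otherwise
`D \ {v}` would still dominate (`v` is dominated by any of its neighbours, all of which lie in `D`).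
Hence `Dᶜ` dominates as well, and the smaller of `D`, `Dᶜ` has at most `n / 2` vertices.
-/

section

variable {V : Type*} {G : SimpleGraph V}

theorem isDominatingSet_univ (G : SimpleGraph V) : IsDominatingSet G Set.univ :=
  fun _ hv => absurd (Set.mem_univ _) hv

theorem IsDominatingSet.diff_singleton {D : Set V} {v : V} (hD : IsDominatingSet G D)
    (hv : ∃ u, G.Adj v u) (hN : ∀ u, G.Adj v u → u ∈ D) : IsDominatingSet G (D \ {v}) := by
  intro u hu
  by_cases huv : u = v
  · subst huv
    obtain ⟨w, hw⟩ := hv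
    exact ⟨w, ⟨hN w hw, hw.ne.symm⟩, hw.symm⟩
  · have huD : u ∉ D := fun huD => hu ⟨huD, huv⟩
    obtain ⟨w, hwD, hwu⟩ := hD u huD
    have hwv : w ≠ v := by
      rintro rfl
      exact huD (hN u hwu)
    exact ⟨w, ⟨hwD, hwv⟩, hwu⟩

variable [Fintype V]

theorem dominationNumber_le_ncard {S : Set V} (hS : IsDominatingSet G S) :
    dominationNumber G ≤ S.ncard :=
  Nat.sInf_le ⟨S, hS, rfl⟩

theorem exists_isDominatingSet_ncard_eq_dominationNumber (G : SimpleGraph V) :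
    ∃ D : Set V, IsDominatingSet G D ∧ D.ncard = dominationNumber G :=
  Nat.sInf_mem (s := {k | ∃ S : Set V, IsDominatingSet G S ∧ S.ncard = k})
    ⟨_, Set.univ, isDominatingSet_univ G, rfl⟩

theorem IsDominatingSet.compl_of_ncard_eq_dominationNumber {D : Set V}
    (hD : IsDominatingSet G D) (hmin : D.ncard = dominationNumber G)
    (h : ∀ v : V, ∃ u, G.Adj v u) : IsDominatingSet G Dᶜ := by
  intro v hv
  rw [Set.mem_compl_iff, not_not] at hv
  by_contra! hN
  have hsmaller : (D \ {v}).ncard < D.ncard :=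
    Set.ncard_sdiff_singleton_lt_of_mem hv
  have hdom : IsDominatingSet G (D \ {v}) :=
    hD.diff_singleton (h v) fun u hu => not_not.mp fun huD => hN u huD hu.symm
  have := dominationNumber_le_ncard hdom
  omega

end

theorem dominationNumber_le_half {V : Type*} [Fintype V] (G : SimpleGraph V)
    (h : ∀ v : V, ∃ u, G.Adj v u) :
    (dominationNumber G : ℝ) ≤ (Fintype.card V : ℝ) / 2 := by
  obtain ⟨D, hD, hmin⟩ := exists_isDominatingSet_ncard_eq_dominationNumber G
  have hcompl := dominationNumber_le_ncard (hD.compl_of_ncard_eq_dominationNumber hmin h)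
  have hsum : D.ncard + Dᶜ.ncard = Fintype.card V := by
    rw [Set.ncard_add_ncard_compl, Nat.card_eq_fintype_card]
  have hdouble : 2 * dominationNumber G ≤ Fintype.card V := by omega
  rw [le_div_iff₀ two_pos, mul_comm]
  exact_mod_cast hdouble
end

section
/- Let x be an eigenvector of Q(G) for the least eigenvalue of a connected non-bipartite graph G, let T be a tree that is a branch of G rooted at u (i.e., G is the coalescence of T and another graph at u) with x nonzero on T. Then for any vertices p, q of T with q on the unique path in T from u to p and q ≠ p, one has |x(q)| < |x(p)|. -/
open SimpleGraph Matrix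

/-!
For an edge `ab` of the tree `T` with `u` on the side of `a`, let `S` be the set of vertices on
the side of `b`. No vertex of `S` touches `H`, so `ba` is the only edge of `G` leaving `S`, and the
restriction `z` of `x` to `S` satisfies `zᵀ Q z = qmin G · zᵀ z - x a * x b`. Minimality of
`qmin G` gives `x a * x b ≤ 0`, with equality only if `z` is itself an eigenvector, which forces
`x b = 0`. Hence zeros propagate along the edges of `T` in both directions, and `x` vanishes
nowhere on `T`.

Working up from the leaves, each child `c` of `b` has `|x b| < |x c|` and the sign opposite to
`x b`, so `x c * x b ≤ -(x b)²`. The eigenequation `(qmin G - deg b) x b = x a + ∑ x c` at `b`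
then gives `(qmin G - 1) (x b)² ≤ x a * x b`, and `|x a| < |x b|` follows because `qmin G > 0`
for a connected non-bipartite graph.
-/

open Finset

section Spectral

variable {V : Type*} [Fintype V] {G : SimpleGraph V}

open Classical in
theorem signlessLaplacian_apply_of_ne {v w : V} (h : v ≠ w) :
    signlessLaplacian G v w = if G.Adj v w then 1 else 0 := by
  simp [signlessLaplacian, degMatrix, diagonal_apply_ne _ h]

open Classical in
theorem signlessLaplacian_mulVec_apply (y : V → ℝ) (v : V) :
    (signlessLaplacian G *ᵥ y) v = G.degree v * y v + ∑ w ∈ G.neighborFinset v, y w := by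
  rw [signlessLaplacian, add_mulVec, Pi.add_apply, degMatrix_mulVec_apply, adjMatrix_mulVec_apply]

theorem isHermitian_signlessLaplacian : (signlessLaplacian G).IsHermitian := by
  classical
  rw [IsHermitian, conjTranspose_eq_transpose_of_trivial, signlessLaplacian, transpose_add,
    isSymm_degMatrix, isSymm_adjMatrix]

open Classical in
theorem dotProduct_signlessLaplacian_mulVec (y : V → ℝ) :
    y ⬝ᵥ (signlessLaplacian G *ᵥ y) =
      (∑ i, ∑ j, if G.Adj i j then (y i + y j) ^ 2 else 0) / 2 := by
  simp_rw [signlessLaplacian, add_mulVec, dotProduct_add, dotProduct_mulVec_degMatrix,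
    dotProduct_mulVec_adjMatrix, degree_eq_sum_if_adj, sum_mul, ite_mul, one_mul, zero_mul,
    ← sum_add_distrib, ite_add_ite, add_zero]
  rw [← add_self_div_two (∑ i, ∑ j, _)]
  conv_lhs => enter [1, 2, 2, i, 2, j]; rw [if_congr (adj_comm G i j) rfl rfl]
  conv_lhs => enter [1, 2]; rw [Finset.sum_comm]
  simp_rw [← sum_add_distrib, ite_add_ite]
  congr 2 with i
  congr 2 with j
  ring_nf

open Classical in
theorem qmin_le_of_mem_spectrum {μ : ℝ} (hμ : μ ∈ spectrum ℝ (signlessLaplacian G)) :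
    qmin G ≤ μ :=
  csInf_le (finite_real_spectrum).bddBelow hμ

open Classical in
theorem posSemidef_signlessLaplacian_sub_qmin :
    (signlessLaplacian G - qmin G • 1).PosSemidef := by
  have hherm : (signlessLaplacian G - qmin G • 1).IsHermitian :=
    isHermitian_signlessLaplacian.sub (Matrix.isHermitian_one.smul (.all _))
  refine hherm.posSemidef_iff_eigenvalues_nonneg.mpr fun i => ?_
  have hi := hherm.eigenvalues_mem_spectrum_real i
  generalize hherm.eigenvalues i = ν at hi
  rw [← Algebra.algebraMap_eq_smul_one, ← spectrum.sub_singleton_eq] at hi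
  obtain ⟨μ, hμ, _, rfl, rfl⟩ := hi
  simpa using qmin_le_of_mem_spectrum hμ

theorem qmin_mul_dotProduct_le (y : V → ℝ) :
    qmin G * (y ⬝ᵥ y) ≤ y ⬝ᵥ (signlessLaplacian G *ᵥ y) := by
  have h := (posSemidef_signlessLaplacian_sub_qmin (G := G)).dotProduct_mulVec_nonneg y
  simp only [star_trivial, sub_mulVec, dotProduct_sub, smul_mulVec, one_mulVec,
    dotProduct_smul, smul_eq_mul] at h
  linarith

theorem signlessLaplacian_mulVec_eq_of_dotProduct_eq {y : V → ℝ}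
    (h : y ⬝ᵥ (signlessLaplacian G *ᵥ y) = qmin G * (y ⬝ᵥ y)) :
    signlessLaplacian G *ᵥ y = qmin G • y := by
  classical
  have h0 := ((posSemidef_signlessLaplacian_sub_qmin (G := G)).dotProduct_mulVec_zero_iff y).mp
    (by simp only [star_trivial, sub_mulVec, dotProduct_sub, smul_mulVec, one_mulVec,
      dotProduct_smul, smul_eq_mul, h, sub_self])
  rwa [sub_mulVec, smul_mulVec, one_mulVec, sub_eq_zero] at h0

end Spectral

theorem SimpleGraph.Connected.colorable_two_of_forall_adj_eq_neg {V : Type*} {G : SimpleGraph V}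
    (hconn : G.Connected) {y : V → ℝ} (hy : y ≠ 0)
    (h : ∀ i j, G.Adj i j → y i = -y j) : G.Colorable 2 := by
  have habs : ∀ i j, G.Reachable i j → |y i| = |y j| := by
    rintro i j ⟨p⟩
    induction p with
    | nil => rfl
    | cons hA _ ih => rw [h _ _ hA, abs_neg, ih]
  obtain ⟨v₀, hv₀⟩ := Function.ne_iff.mp hy
  have hne : ∀ v, y v ≠ 0 := fun v hv =>
    hv₀ (abs_eq_zero.mp ((habs v₀ v (hconn v₀ v)).trans (by simp [hv])))
  refine (Coloring.mk (fun v => decide (0 < y v)) fun {v w} hvw => ?_).colorable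
  rcases (hne w).lt_or_gt with hw | hw <;> simp [h v w hvw, hw, hw.le]

section Positivity

variable {V : Type*} [Fintype V] {G : SimpleGraph V}

theorem dotProduct_signlessLaplacian_mulVec_nonneg (y : V → ℝ) :
    0 ≤ y ⬝ᵥ (signlessLaplacian G *ᵥ y) := by
  classical
  rw [dotProduct_signlessLaplacian_mulVec]
  positivity

theorem dotProduct_signlessLaplacian_mulVec_eq_zero_iff (y : V → ℝ) :
    y ⬝ᵥ (signlessLaplacian G *ᵥ y) = 0 ↔ ∀ i j, G.Adj i j → y i = -y j := by
  classical
  simp (disch := intros; positivity) [dotProduct_signlessLaplacian_mulVec,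
    sum_eq_zero_iff_of_nonneg, add_eq_zero_iff_eq_neg]

theorem qmin_pos (hconn : G.Connected) (hnb : ¬ G.Colorable 2) {x : V → ℝ} (hx0 : x ≠ 0)
    (hx : signlessLaplacian G *ᵥ x = qmin G • x) : 0 < qmin G := by
  by_contra! hle
  have hzero : x ⬝ᵥ (signlessLaplacian G *ᵥ x) = 0 := by
    refine le_antisymm ?_ (dotProduct_signlessLaplacian_mulVec_nonneg x)
    rw [hx, dotProduct_smul, smul_eq_mul]
    exact mul_nonpos_of_nonpos_of_nonneg hle (by simpa using dotProduct_self_star_nonneg x)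
  exact hnb (hconn.colorable_two_of_forall_adj_eq_neg hx0
    ((dotProduct_signlessLaplacian_mulVec_eq_zero_iff x).mp hzero))

end Positivity

structure SimpleGraph.IsBridgeCut {V : Type*} (G : SimpleGraph V) (S : Set V) (b a : V) :
    Prop where
  mem : b ∈ S
  notMem : a ∉ S
  adj : G.Adj b a
  eq_of_adj : ∀ v ∈ S, ∀ w ∉ S, G.Adj v w → v = b ∧ w = a

section Cut

variable {V : Type*} [Fintype V] {G : SimpleGraph V} {S R : Set V} {a b : V}

theorem dotProduct_indicator_signlessLaplacian_mulVec_indicator (hSR : Disjoint S R)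
    (hb : b ∈ S) (ha : a ∈ R) (hba : G.Adj b a)
    (hcut : ∀ v ∈ S, ∀ w ∈ R, G.Adj v w → v = b ∧ w = a) (f g : V → ℝ) :
    S.indicator f ⬝ᵥ (signlessLaplacian G *ᵥ R.indicator g) = f b * g a := by
  classical
  have hterm : ∀ v w, S.indicator f v * (signlessLaplacian G v w * R.indicator g w) =
      if v = b ∧ w = a then f b * g a else 0 := by
    intro v w
    by_cases hv : v ∈ S
    · by_cases hw : w ∈ R
      · have hvw : v ≠ w := fun h => hSR.notMem_of_mem_left hv (h ▸ hw)
        by_cases hedge : v = b ∧ w = a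
        · obtain ⟨rfl, rfl⟩ := hedge
          simp [hv, hw, signlessLaplacian_apply_of_ne hvw, hba]
        · have hnadj : ¬ G.Adj v w := fun h => hedge (hcut v hv w hw h)
          simp [hedge, signlessLaplacian_apply_of_ne hvw, hnadj]
      · simp [hw, show ¬(v = b ∧ w = a) from fun h => hw (h.2 ▸ ha)]
    · simp [hv, show ¬(v = b ∧ w = a) from fun h => hv (h.1 ▸ hb)]
  simp only [dotProduct, mulVec, Finset.mul_sum, hterm, ite_and]
  simp

variable {x : V → ℝ}

theorem dotProduct_indicator_signlessLaplacian_mulVec_of_cut {μ : ℝ}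
    (hx : signlessLaplacian G *ᵥ x = μ • x) (hS : G.IsBridgeCut S b a) :
    S.indicator x ⬝ᵥ (signlessLaplacian G *ᵥ S.indicator x) =
      μ * (S.indicator x ⬝ᵥ S.indicator x) - x a * x b := by
  have hsplit : S.indicator x = x - Sᶜ.indicator x := by
    rw [eq_sub_iff_add_eq, Set.indicator_self_add_compl]
  have hself : S.indicator x ⬝ᵥ x = S.indicator x ⬝ᵥ S.indicator x :=
    Finset.sum_congr rfl fun v _ => by by_cases hv : v ∈ S <;> simp [hv]
  conv_lhs => enter [2, 2]; rw [hsplit]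
  rw [mulVec_sub, dotProduct_sub, hx, dotProduct_smul, smul_eq_mul, hself,
    dotProduct_indicator_signlessLaplacian_mulVec_indicator disjoint_compl_right hS.mem
      hS.notMem hS.adj hS.eq_of_adj,
    mul_comm (x b)]

theorem mul_nonpos_of_cut (hx : signlessLaplacian G *ᵥ x = qmin G • x) (hS : G.IsBridgeCut S b a) :
    x a * x b ≤ 0 := by
  have h := qmin_mul_dotProduct_le (G := G) (S.indicator x)
  rw [dotProduct_indicator_signlessLaplacian_mulVec_of_cut hx hS] at h
  linarith

/-- If `x a * x b = 0`, then `S.indicator x` attains the Rayleigh minimum, so it is itself an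
eigenvector; its eigenequation at `a`, outside `S`, reads `x b = 0`. -/
theorem eq_zero_of_cut (hx : signlessLaplacian G *ᵥ x = qmin G • x) (hS : G.IsBridgeCut S b a)
    (hab : x a * x b = 0) : x b = 0 := by
  have hz := signlessLaplacian_mulVec_eq_of_dotProduct_eq (by
    rw [dotProduct_indicator_signlessLaplacian_mulVec_of_cut hx hS, hab, sub_zero])
  have hcut' : ∀ v ∈ Sᶜ, ∀ w ∈ S, G.Adj v w → v = a ∧ w = b := fun v hv w hw h =>
    (hS.eq_of_adj w hw v hv h.symm).symm
  have horth : Sᶜ.indicator 1 ⬝ᵥ S.indicator x = 0 :=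
    Finset.sum_eq_zero fun v _ => by by_cases hv : v ∈ S <;> simp [hv]
  have h := congrArg (Sᶜ.indicator 1 ⬝ᵥ ·) hz
  simp only [dotProduct_indicator_signlessLaplacian_mulVec_indicator disjoint_compl_left hS.notMem
    hS.mem hS.adj.symm hcut', dotProduct_smul, horth, smul_zero] at h
  simpa using h

end Cut

section Vertex

variable {V : Type*} [Fintype V] {G : SimpleGraph V} {x : V → ℝ} {μ : ℝ} {a b : V}

open Classical in
theorem sub_degree_mul_eq_of_eigen (hx : signlessLaplacian G *ᵥ x = μ • x) (hba : G.Adj b a) :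
    (μ - G.degree b) * x b = x a + ∑ c ∈ (G.neighborFinset b).erase a, x c := by
  have h := congrFun hx b
  rw [signlessLaplacian_mulVec_apply, Pi.smul_apply, smul_eq_mul,
    ← Finset.add_sum_erase _ _ ((G.mem_neighborFinset b a).mpr hba)] at h
  linarith

theorem eq_zero_of_eigen (hx : signlessLaplacian G *ᵥ x = μ • x) (hba : G.Adj b a) (hb : x b = 0)
    (hc : ∀ c, G.Adj b c → c ≠ a → x c = 0) : x a = 0 := by
  classical
  have h := sub_degree_mul_eq_of_eigen hx hba
  rwa [hb, mul_zero, Finset.sum_eq_zero fun c hc' => by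
    obtain ⟨hca, hbc⟩ := Finset.mem_erase.mp hc'
    exact hc c ((G.mem_neighborFinset b c).mp hbc) hca, add_zero, eq_comm] at h

open Classical in
theorem sub_one_mul_sq_le_of_eigen (hx : signlessLaplacian G *ᵥ x = μ • x) (hba : G.Adj b a)
    (hc : ∀ c, G.Adj b c → c ≠ a → x c * x b ≤ -x b ^ 2) : (μ - 1) * x b ^ 2 ≤ x a * x b := by
  have h := sub_degree_mul_eq_of_eigen hx hba
  set N := (G.neighborFinset b).erase a
  have hcard : (N.card : ℝ) + 1 = G.degree b := by
    rw [← card_neighborFinset_eq_degree, ← Finset.card_erase_add_one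
      ((G.mem_neighborFinset b a).mpr hba), Nat.cast_add_one]
  have hsum : ∑ c ∈ N, x c * x b ≤ N.card * -x b ^ 2 := by
    rw [← nsmul_eq_mul, ← Finset.sum_const]
    refine Finset.sum_le_sum fun c hc' => ?_
    obtain ⟨hca, hbc⟩ := Finset.mem_erase.mp hc'
    exact hc c ((G.mem_neighborFinset b c).mp hbc) hca
  rw [← Finset.sum_mul] at hsum
  rw [← hcard] at h
  linear_combination x b * h + hsum

end Vertex

namespace SimpleGraph

variable {W : Type*} {Γ : SimpleGraph W} {a b c v w r : W}

/-- For an edge `ab` of a tree, the vertices on the side of `b`. -/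
def farSide (Γ : SimpleGraph W) (a b : W) : Set W :=
  {v | ∃ p : Γ.Walk b v, a ∉ p.support}

theorem mem_farSide_self (h : a ≠ b) : b ∈ Γ.farSide a b :=
  ⟨Walk.nil, by simpa using h⟩

theorem notMem_farSide_left : a ∉ Γ.farSide a b :=
  fun ⟨p, hp⟩ => hp p.end_mem_support

theorem mem_farSide_of_adj (hv : v ∈ Γ.farSide a b) (h : Γ.Adj v w) (hw : w ≠ a) :
    w ∈ Γ.farSide a b := by
  obtain ⟨p, hp⟩ := hv
  exact ⟨p.concat h, by simp [Walk.support_concat, hp, hw.symm]⟩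

theorem IsAcyclic.eq_of_mem_farSide_of_adj (hΓ : Γ.IsAcyclic) (hab : Γ.Adj a b)
    (hv : v ∈ Γ.farSide a b) (hva : Γ.Adj v a) : v = b := by
  classical
  obtain ⟨p, hp⟩ := hv
  have hvab := hΓ.mem_support_of_ne_mem_support_of_adj_of_isPath
    (Path.singleton hab.symm).2 p.bypass_isPath hva.symm
    (fun h => hp (p.support_bypass_subset_support h))
  simp only [Path.singleton, Walk.support_cons, Walk.support_nil, List.mem_cons,
    List.not_mem_nil, or_false] at hvab
  exact hvab.resolve_right fun h => hp (h ▸ p.end_mem_support)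

theorem IsAcyclic.eq_and_eq_of_mem_farSide (hΓ : Γ.IsAcyclic) (hab : Γ.Adj a b)
    (hv : v ∈ Γ.farSide a b) (hw : w ∉ Γ.farSide a b) (h : Γ.Adj v w) : v = b ∧ w = a := by
  obtain rfl : w = a := by_contra fun hwa => hw (mem_farSide_of_adj hv h hwa)
  exact ⟨hΓ.eq_of_mem_farSide_of_adj hab hv h, rfl⟩

theorem IsAcyclic.farSide_ssubset (hΓ : Γ.IsAcyclic) (hab : Γ.Adj a b) (hbc : Γ.Adj b c)
    (hca : c ≠ a) : Γ.farSide b c ⊂ Γ.farSide a b := by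
  classical
  refine ⟨fun v ⟨p, hp⟩ => ⟨Walk.cons hbc p, ?_⟩,
    fun h => notMem_farSide_left (h (mem_farSide_self hab.ne))⟩
  simp only [Walk.support_cons, List.mem_cons, not_or]
  refine ⟨hab.ne, fun ha => hca ?_⟩
  have hac : a ∈ Γ.farSide b c :=
    ⟨p.takeUntil a ha, fun hb => hp (p.support_takeUntil_subset_support ha hb)⟩
  exact (hΓ.eq_of_mem_farSide_of_adj hbc hac hab).symm

variable {R : W → W → Prop}

theorem IsAcyclic.rel_of_mem_support_cons (hΓ : Γ.IsAcyclic) (hR : ∀ a b c, R a b → R b c → R a c)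
    (hRadj : ∀ a b, Γ.Adj a b → r ∉ Γ.farSide a b → R a b) (hab : Γ.Adj a b)
    (hr : r ∉ Γ.farSide a b) {p : Γ.Walk b v} (hp : (Walk.cons hab p).IsPath) {q : W}
    (hq : q ∈ (Walk.cons hab p).support) (hqv : q ≠ v) : R q v := by
  induction p generalizing a q with
  | nil =>
    obtain rfl | rfl : q = a ∨ q = _ := by simpa using hq
    · exact hRadj _ _ hab hr
    · exact absurd rfl hqv
  | @cons b c v hbc p ih =>
    have hca : c ≠ a := by rintro rfl; simp at hp
    have hr' : r ∉ Γ.farSide b c := fun h => hr ((hΓ.farSide_ssubset hab hbc hca).1 h)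
    have hp' := ((Walk.cons_isPath_iff _ _).mp hp).1
    have hbv : R b v := ih hbc hr' hp' (by simp) (by rintro rfl; simp at hp')
    obtain rfl | hq := List.mem_cons.mp hq
    · exact hR _ _ _ (hRadj _ _ hab hr) hbv
    · exact ih hbc hr' hp' hq hqv

theorem IsAcyclic.rel_of_mem_support (hΓ : Γ.IsAcyclic) (hR : ∀ a b c, R a b → R b c → R a c)
    (hRadj : ∀ a b, Γ.Adj a b → r ∉ Γ.farSide a b → R a b) {p : Γ.Walk r v} (hp : p.IsPath)
    {q : W} (hq : q ∈ p.support) (hqv : q ≠ v) : R q v := by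
  cases p with
  | nil => exact absurd (by simpa using hq) hqv
  | cons hab p => exact hΓ.rel_of_mem_support_cons hR hRadj hab notMem_farSide_left hp hq hqv

end SimpleGraph

def SimpleGraph.Subgraph.IsAttachedAt {V : Type*} {G : SimpleGraph V} (T : G.Subgraph)
    (u : V) : Prop :=
  ∀ ⦃v w : V⦄, v ∈ T.verts → v ≠ u → G.Adj v w → T.Adj v w

theorem SimpleGraph.Subgraph.isAttachedAt_of_sup_eq_top {V : Type*} {G : SimpleGraph V}
    {T H : G.Subgraph} {u : V} (hunion : T ⊔ H = ⊤) (hinter : T.verts ∩ H.verts ⊆ {u}) :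
    T.IsAttachedAt u := by
  intro v w hv hvu h
  have htop : (⊤ : G.Subgraph).Adj v w := Subgraph.top_adj.mpr h
  rw [← hunion, Subgraph.sup_adj] at htop
  exact htop.resolve_right fun h' => hvu (hinter ⟨hv, h'.fst_mem⟩)

section Branch

variable {V : Type*} {G : SimpleGraph V} {T : G.Subgraph} {u : V} {a b : T.verts}

theorem exists_coe_adj_of_adj (hT : T.IsAttachedAt u) (hbu : ↑b ≠ u) {c : V} (h : G.Adj b c) :
    ∃ hc : c ∈ T.verts, T.coe.Adj b ⟨c, hc⟩ :=
  ⟨(hT b.2 hbu h).snd_mem, hT b.2 hbu h⟩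

theorem coe_ne_of_notMem_farSide (hu : u ∈ T.verts) (hab : T.coe.Adj a b)
    (hr : ⟨u, hu⟩ ∉ T.coe.farSide a b) : ↑b ≠ u := by
  rintro hbu
  exact hr ((Subtype.ext hbu : b = ⟨u, hu⟩) ▸ mem_farSide_self hab.ne)

theorem isBridgeCut_farSide (hT : T.IsAttachedAt u) (htree : T.coe.IsAcyclic) (hu : u ∈ T.verts)
    (hab : T.coe.Adj a b) (hr : ⟨u, hu⟩ ∉ T.coe.farSide a b) :
    G.IsBridgeCut (Subtype.val '' T.coe.farSide a b) b a where
  mem := ⟨b, mem_farSide_self hab.ne, rfl⟩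
  notMem := by rintro ⟨a', ha', h⟩; exact notMem_farSide_left (Subtype.ext h ▸ ha')
  adj := (T.coe_adj_sub _ _ hab).symm
  eq_of_adj := by
    rintro _ ⟨v, hv, rfl⟩ w hw h
    have hvu : ↑v ≠ u := fun hvu => hr ((Subtype.ext hvu : v = ⟨u, hu⟩) ▸ hv)
    obtain ⟨hwT, hvw⟩ := exists_coe_adj_of_adj hT hvu h
    have hw' : ⟨w, hwT⟩ ∉ T.coe.farSide a b := fun hw' => hw ⟨_, hw', rfl⟩
    obtain ⟨rfl, rfl⟩ := htree.eq_and_eq_of_mem_farSide hab hv hw' hvw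
    exact ⟨rfl, rfl⟩

theorem exists_child_of_adj (hT : T.IsAttachedAt u) (htree : T.coe.IsAcyclic) (hu : u ∈ T.verts)
    (hab : T.coe.Adj a b) (hr : ⟨u, hu⟩ ∉ T.coe.farSide a b) {c : V} (hbc : G.Adj b c)
    (hca : c ≠ a) :
    ∃ c' : T.verts, ↑c' = c ∧ T.coe.Adj b c' ∧ T.coe.farSide b c' ⊂ T.coe.farSide a b := by
  obtain ⟨hc, hbc'⟩ := exists_coe_adj_of_adj hT (coe_ne_of_notMem_farSide hu hab hr) hbc
  exact ⟨⟨c, hc⟩, rfl, hbc', htree.farSide_ssubset hab hbc' fun h => hca (congrArg Subtype.val h)⟩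

end Branch

theorem mul_le_neg_sq_of_mul_nonpos {x y : ℝ} (h : x * y ≤ 0) (hxy : |y| ≤ |x|) :
    x * y ≤ -y ^ 2 := by
  have h1 : x * y = -(|x| * |y|) := by rw [← abs_mul, abs_of_nonpos h, neg_neg]
  rw [h1, ← sq_abs y, sq]
  exact neg_le_neg (mul_le_mul_of_nonneg_right hxy (abs_nonneg y))

theorem abs_lt_abs_of_sub_one_mul_sq_le {x y μ : ℝ} (hμ : 0 < μ) (hy : y ≠ 0)
    (h : (μ - 1) * y ^ 2 ≤ x * y) (hxy : x * y ≤ 0) : |x| < |y| := by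
  have h1 : |x| * |y| = -(x * y) := by rw [← abs_mul, abs_of_nonpos hxy]
  have h2 : |x| * |y| < |y| * |y| := by
    rw [h1, abs_mul_abs_self]
    nlinarith [pow_pos (abs_pos.mpr hy) 2, sq_abs y]
  exact lt_of_mul_lt_mul_right h2 (abs_nonneg y)

section Eigenvector

variable {V : Type*} [Fintype V] {G : SimpleGraph V} {T : G.Subgraph} {u : V} {x : V → ℝ}
  {a b : T.verts}

theorem eq_zero_iff_of_farSide (hx : signlessLaplacian G *ᵥ x = qmin G • x)
    (hT : T.IsAttachedAt u) (htree : T.coe.IsAcyclic) (hu : u ∈ T.verts) (hab : T.coe.Adj a b)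
    (hr : ⟨u, hu⟩ ∉ T.coe.farSide a b) :
    x a = 0 ↔ x b = 0 := by
  have hcut := isBridgeCut_farSide hT htree hu hab hr
  refine ⟨fun ha => eq_zero_of_cut hx hcut (by rw [ha, zero_mul]), fun hb => ?_⟩
  refine eq_zero_of_eigen hx hcut.adj hb fun c hbc hca => ?_
  obtain ⟨c', rfl, hbc', hsub⟩ := exists_child_of_adj hT htree hu hab hr hbc hca
  exact eq_zero_of_cut hx (isBridgeCut_farSide hT htree hu hbc' fun h => hr (hsub.1 h))
    (by rw [hb, zero_mul])

theorem ne_zero_of_mem_verts (hx : signlessLaplacian G *ᵥ x = qmin G • x)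
    (hT : T.IsAttachedAt u) (htree : T.coe.IsTree) (hu : u ∈ T.verts)
    (hnz : ∃ v ∈ T.verts, x v ≠ 0) (v : T.verts) : x v ≠ 0 := by
  have hiff : ∀ v : T.verts, x u = 0 ↔ x v = 0 := by
    intro v
    obtain ⟨p, hp, -⟩ := htree.existsUnique_path ⟨u, hu⟩ v
    by_cases hv : v = ⟨u, hu⟩
    · rw [hv]
    exact htree.isAcyclic.rel_of_mem_support (R := fun a b : T.verts => x a = 0 ↔ x b = 0)
      (fun _ _ _ => Iff.trans) (fun a b hab hr => eq_zero_iff_of_farSide hx hT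
        htree.isAcyclic hu hab hr) hp p.start_mem_support (Ne.symm hv)
  obtain ⟨w, hw, hxw⟩ := hnz
  exact fun hv => hxw ((hiff ⟨w, hw⟩).mp ((hiff v).mpr hv))

theorem abs_lt_abs_of_farSide (hx : signlessLaplacian G *ᵥ x = qmin G • x) (hq : 0 < qmin G)
    (hT : T.IsAttachedAt u) (htree : T.coe.IsAcyclic) (hu : u ∈ T.verts)
    (hne : ∀ v : T.verts, x v ≠ 0) (hab : T.coe.Adj a b)
    (hr : ⟨u, hu⟩ ∉ T.coe.farSide a b) : |x a| < |x b| := by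
  induction hn : (T.coe.farSide a b).ncard using Nat.strong_induction_on generalizing a b with
  | _ n ih =>
  have hcut := isBridgeCut_farSide hT htree hu hab hr
  have hchild : ∀ c, G.Adj b c → c ≠ a → x c * x b ≤ -x b ^ 2 := by
    intro c hbc hca
    obtain ⟨c', rfl, hbc', hsub⟩ := exists_child_of_adj hT htree hu hab hr hbc hca
    have hr' : ⟨u, hu⟩ ∉ T.coe.farSide b c' := fun h => hr (hsub.1 h)
    have hlt := ih _ (hn ▸ Set.ncard_lt_ncard hsub (Set.toFinite _)) hbc' hr' rfl
    have hneg := mul_nonpos_of_cut hx (isBridgeCut_farSide hT htree hu hbc' hr')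
    exact mul_le_neg_sq_of_mul_nonpos (by rwa [mul_comm]) hlt.le
  exact abs_lt_abs_of_sub_one_mul_sq_le hq (hne b) (sub_one_mul_sq_le_of_eigen hx hcut.adj hchild)
    (mul_nonpos_of_cut hx hcut)

end Eigenvector

theorem tree_branch_strict_increase_general {V : Type*} [Fintype V] (G : SimpleGraph V)
    (hconn : G.Connected) (hnb : ¬ G.Colorable 2)
    (x : V → ℝ) (hx0 : x ≠ 0)
    (hx : (signlessLaplacian G).mulVec x = qmin G • x)
    (T H : G.Subgraph) (u : V) (hu : u ∈ T.verts)
    (hunion : T ⊔ H = ⊤) (hinter : T.verts ∩ H.verts = {u})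
    (htree : T.coe.IsTree)
    (hnz : ∃ v ∈ T.verts, x v ≠ 0)
    (p q : T.verts) (w : T.coe.Walk ⟨u, hu⟩ p) (hw : w.IsPath)
    (hq : q ∈ w.support) (hqp : q ≠ p) :
    |x ↑q| < |x ↑p| := by
  have hT := Subgraph.isAttachedAt_of_sup_eq_top hunion hinter.subset
  have hne := ne_zero_of_mem_verts hx hT htree hu hnz
  exact htree.isAcyclic.rel_of_mem_support (R := fun a b : T.verts => |x a| < |x b|)
    (fun _ _ _ => lt_trans)
    (fun a b hab hr => abs_lt_abs_of_farSide hx (qmin_pos hconn hnb hx0 hx) hT htree.isAcyclic hu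
      hne hab hr) hw hq hqp

theorem tree_branch_strict_increase {V : Type*} [Fintype V] (G : SimpleGraph V)
    (hconn : G.Connected) (hnb : ¬ G.Colorable 2)
    (x : V → ℝ) (hx0 : x ≠ 0)
    (hx : (signlessLaplacian G).mulVec x = qmin G • x)
    (T H : G.Subgraph) (u : V) (hu : u ∈ T.verts)
    (hunion : T ⊔ H = ⊤) (hinter : T.verts ∩ H.verts = {u})
    (hTnt : 1 < T.verts.ncard) (hHnt : 1 < H.verts.ncard)
    (htree : T.coe.IsTree)
    (hnz : ∃ v ∈ T.verts, x v ≠ 0)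
    (p q : T.verts) (w : T.coe.Walk ⟨u, hu⟩ p) (hw : w.IsPath)
    (hq : q ∈ w.support) (hqp : q ≠ p) :
    |x ↑q| < |x ↑p| :=
  tree_branch_strict_increase_general G hconn hnb x hx0 hx T H u hu hunion hinter htree hnz p q w hw
    hq hqp
end

section
/- For every connected graph G of order n with at least one odd cycle and every minimum dominating set U of G with |U| = γ ≥ 2, there exists a spanning tree T of the bipartite subgraph structure such that adding a single edge of G to T yields a connected non-bipartite unicyclic spanning subgraph of G. -/
open SimpleGraph Matrix

/-!
Take a spanning tree `T` of `G` and a proper 2-colouring of it. Since `G` is not bipartite, some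
edge `uv` of `G` is monochromatic, so it is not an edge of `T`, and the `T`-path from `u` to `v`
has even length. Closing that path with `uv` gives an odd cycle, so `T + uv` is connected,
non-bipartite and has `(n - 1) + 1 = n` edges.
-/

namespace SimpleGraph

variable {V : Type*} {G T : SimpleGraph V} {u v : V}

lemma exists_adj_eq_of_not_colorable {α : Type*} [Fintype α]
    (hG : ¬ G.Colorable (Fintype.card α)) (f : V → α) : ∃ u v, G.Adj u v ∧ f u = f v := by
  by_contra! hf
  exact hG (Coloring.mk f fun huv => hf _ _ huv).colorable

lemma not_colorable_two_sup_edge (c : T.Coloring Bool) (hreach : T.Reachable u v) (hne : u ≠ v)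
    (hc : c u = c v) : ¬ (T ⊔ edge u v).Colorable 2 := by
  obtain ⟨p⟩ := hreach
  have hp : Even p.length := (c.even_length_iff_congr p).mpr (by rw [hc])
  have hvu : (T ⊔ edge u v).Adj v u := Or.inr <| (edge_adj ..).mpr ⟨Or.inr ⟨rfl, rfl⟩, hne.symm⟩
  rw [two_colorable_iff_forall_loop_even]
  intro h
  have hloop := h u ((p.mapLe le_sup_left).concat hvu)
  rw [Walk.length_concat, Walk.length_mapLe, Nat.even_add_one] at hloop
  exact hloop hp

lemma IsTree.ncard_edgeSet_sup_edge [Fintype V] (hT : T.IsTree) (hn : ¬ T.Adj u v) (hne : u ≠ v) :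
    (T ⊔ edge u v).edgeSet.ncard = Fintype.card V := by
  classical
  rw [← coe_edgeFinset, Set.ncard_coe_finset, T.card_edgeFinset_sup_edge hn hne, hT.card_edgeFinset]

end SimpleGraph

theorem exists_spanning_tree_plus_edge_general {V : Type*} [Fintype V] (G : SimpleGraph V)
    (hconn : G.Connected) (hnb : ¬ G.Colorable 2) :
    ∃ T : SimpleGraph V, T ≤ G ∧ T.Connected ∧ T.IsAcyclic ∧
      ∃ e ∈ G.edgeSet \ T.edgeSet,
        (T ⊔ SimpleGraph.fromEdgeSet {e}).Connected ∧
        ¬ (T ⊔ SimpleGraph.fromEdgeSet {e}).Colorable 2 ∧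
        (T ⊔ SimpleGraph.fromEdgeSet {e}).edgeSet.ncard = Fintype.card V := by
  obtain ⟨T, hTG, hT⟩ := hconn.exists_isTree_le
  let c : T.Coloring Bool := recolorOfEquiv T finTwoEquiv hT.colorable_two.some
  obtain ⟨u, v, huv, hc⟩ := exists_adj_eq_of_not_colorable (α := Bool) hnb c
  have hTuv : ¬ T.Adj u v := fun h => c.valid h hc
  exact ⟨T, hTG, hT.connected, hT.isAcyclic, s(u, v), ⟨huv, hTuv⟩,
    hT.connected.mono le_sup_left, not_colorable_two_sup_edge c (hT.connected u v) huv.ne hc,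
    hT.ncard_edgeSet_sup_edge hTuv huv.ne⟩

theorem exists_spanning_tree_plus_edge {V : Type*} [Fintype V] (G : SimpleGraph V)
    (hconn : G.Connected) (hnb : ¬ G.Colorable 2)
    (U : Set V) (hU : IsDominatingSet G U)
    (hcard : U.ncard = dominationNumber G) (h2 : 2 ≤ dominationNumber G) :
    ∃ T : SimpleGraph V, T ≤ G ∧ T.Connected ∧ T.IsAcyclic ∧
      ∃ e ∈ G.edgeSet \ T.edgeSet,
        (T ⊔ SimpleGraph.fromEdgeSet {e}).Connected ∧
        ¬ (T ⊔ SimpleGraph.fromEdgeSet {e}).Colorable 2 ∧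
        (T ⊔ SimpleGraph.fromEdgeSet {e}).edgeSet.ncard = Fintype.card V :=
  exists_spanning_tree_plus_edge_general G hconn hnb
end
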